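/- Suppose H is a horoball of the Groves–Manning space X, x,y ∈ H(k), and ψ = (α₁, τ₁, α₂, τ₂, …, αₙ, τₙ, α_{n+1}) is a path in H^k between x and y, where each αᵢ is a nontrivial vertical segment and each τᵢ is a nontrivial horizontal segment. If γ is a projection of ψ into H(k), then for every vertex of γ, the vertical line at that vertex passes within 1 horizontal unit of a vertex of one of the τᵢ. -/

import Mathlib

/-! Core definitions: Cayley graphs, combinatorial horoballs, and the
Groves–Manning space of a relatively hyperbolic pair, as a locally finite graph. -/

open SimpleGraph

namespace GM

variable {G : Type} [Group G] {ι : Type}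

/-- Adjacency in the Cayley graph of `G` with respect to the symmetrized set `S`. -/
def cayleyAdj (S : Set G) (a b : G) : Prop :=
  a ≠ b ∧ (a⁻¹ * b ∈ S ∨ b⁻¹ * a ∈ S)

/-- The Cayley graph of `G` with respect to `S`. -/
def cayleyGraph (S : Set G) : SimpleGraph G where
  Adj := cayleyAdj S
  symm := by constructor; rintro a b ⟨h1, h2⟩; exact ⟨h1.symm, h2.symm⟩
  loopless := ⟨fun a h => h.1 rfl⟩

/-- The full subgraph of the Cayley graph on the left cosets of `P i`
(the union over all cosets; distinct cosets lie in distinct components). -/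
def cosetGraph (S : Set G) (P : ι → Subgroup G) (i : ι) : SimpleGraph G where
  Adj a b := cayleyAdj S a b ∧ a⁻¹ * b ∈ P i
  symm := by
    constructor
    rintro a b ⟨⟨h0, h1⟩, h2⟩
    refine ⟨⟨h0.symm, h1.symm⟩, ?_⟩
    have := (P i).inv_mem h2
    simpa [mul_inv_rev] using this
  loopless := ⟨fun a h => h.1.1 rfl⟩

/-- Vertices of the Groves–Manning space: the group `G` (depth 0), together with,
for each `i : ι` and `g : G`, a vertex `(g, k)` at depth `k ≥ 1` in the combinatorial
horoball over the coset `g • (P i)`. -/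
def GMVert (G ι : Type) : Type := G ⊕ (ι × G × ℕ+)

/-- The depth function `𝒟` on vertices. -/
def depth : GMVert G ι → ℕ
  | .inl _ => 0
  | .inr (_, _, k) => (k : ℕ)

/-- The underlying group element ("base") of a vertex. -/
def baseElt : GMVert G ι → G
  | .inl g => g
  | .inr (_, g, _) => g

/-- The vertex over `g` at depth `l` in the horoballs for the subgroup `P i`. -/
def atLevel (i : ι) (g : G) : ℕ → GMVert G ι
  | 0 => .inl g
  | (l + 1) => .inr (i, g, ⟨l + 1, Nat.succ_pos l⟩)

/-- Horizontal adjacency at depth `k ≥ 1` inside a horoball: two distinct elements of a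
common left coset of `P i` whose distance in the coset graph is at most `2 ^ k`. -/
def horizAdjPos (S : Set G) (P : ι → Subgroup G) (i : ι) (k : ℕ) (a b : G) : Prop :=
  a ≠ b ∧ a⁻¹ * b ∈ P i ∧ (cosetGraph S P i).Reachable a b ∧ (cosetGraph S P i).dist a b ≤ 2 ^ k

/-- Horizontal adjacency at depth `l` (at depth `0` this is an edge of the coset graph). -/
def hAdjL (S : Set G) (P : ι → Subgroup G) (i : ι) (l : ℕ) (a b : G) : Prop :=
  match l with
  | 0 => (cosetGraph S P i).Adj a b
  | (m + 1) => horizAdjPos S P i (m + 1) a b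

/-- Adjacency in the Groves–Manning space: Cayley edges at depth 0, vertical edges
joining `(g, k)` to `(g, k+1)`, and horizontal horoball edges. -/
def gmAdj (S : Set G) (P : ι → Subgroup G) : GMVert G ι → GMVert G ι → Prop
  | .inl a, .inl b => cayleyAdj S a b
  | .inl a, .inr (_, b, k) => a = b ∧ (k : ℕ) = 1
  | .inr (_, a, k), .inl b => a = b ∧ (k : ℕ) = 1
  | .inr (i, a, k), .inr (j, b, l) =>
      i = j ∧ ((a = b ∧ ((l : ℕ) = (k : ℕ) + 1 ∨ (k : ℕ) = (l : ℕ) + 1)) ∨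
        ((k : ℕ) = (l : ℕ) ∧ horizAdjPos S P i (k : ℕ) a b))

/-- The (1-skeleton of the) Groves–Manning space of `(G, {P i}, S)`. -/
def GMGraph (S : Set G) (P : ι → Subgroup G) : SimpleGraph (GMVert G ι) where
  Adj := gmAdj S P
  symm := by
    constructor
    rintro (a | ⟨i, a, k⟩) (b | ⟨j, b, l⟩) h
    · exact ⟨h.1.symm, h.2.symm⟩
    · exact ⟨h.1.symm, h.2⟩
    · exact ⟨h.1.symm, h.2⟩
    · obtain ⟨rfl, (⟨rfl, hv⟩ | ⟨hk, hh⟩)⟩ := h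
      · exact ⟨rfl, Or.inl ⟨rfl, hv.symm⟩⟩
      · refine ⟨rfl, Or.inr ⟨hk.symm, hh.1.symm, ?_, hh.2.2.1.symm, ?_⟩⟩
        · have := (P i).inv_mem hh.2.1; simpa [mul_inv_rev] using this
        · rw [SimpleGraph.dist_comm, ← hk]; exact hh.2.2.2
  loopless := by
    constructor
    rintro (a | ⟨i, a, k⟩) h
    · exact h.1 rfl
    · obtain ⟨-, (⟨-, hv⟩ | ⟨-, hh⟩)⟩ := h
      · omega
      · exact hh.1 rfl

variable (S : Set G) (P : ι → Subgroup G)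

/-- The identity vertex `*` of the Groves–Manning space. -/
def idv : GMVert G ι := Sum.inl 1

/-- The ball `B_r(c)` of radius `r` about `c`, in the edge-path metric of the
Groves–Manning space. -/
def gball (c : GMVert G ι) (r : ℕ) : Set (GMVert G ι) :=
  {v | (GMGraph S P).dist c v ≤ r}

/-- The horoball over the coset `t • (P i)`. -/
def horoball (i : ι) (t : G) : Set (GMVert G ι) :=
  fun v => match v with
  | .inl g => t⁻¹ * g ∈ P i
  | .inr (j, g, _) => j = i ∧ t⁻¹ * g ∈ P i

/-- `H(m)`: the vertices of the horoball at depth exactly `m`. -/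
def horoSphere (i : ι) (t : G) (m : ℕ) : Set (GMVert G ι) :=
  {v | v ∈ horoball P i t ∧ depth v = m}

/-- `H^m`: the `m`-horoball, all vertices of the horoball at depth at least `m`. -/
def horoDeep (i : ι) (t : G) (m : ℕ) : Set (GMVert G ι) :=
  {v | v ∈ horoball P i t ∧ m ≤ depth v}

/-- A walk is geodesic if its length realizes the graph distance of its endpoints. -/
def IsGeodesic {V : Type} (Γ : SimpleGraph V) {a b : V} (p : Γ.Walk a b) : Prop :=
  p.length = Γ.dist a b

/-- `Γ` is `δ`-hyperbolic: all geodesic triangles are `δ`-slim. -/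
def SlimTriangles {V : Type} (Γ : SimpleGraph V) (δ : ℕ) : Prop :=
  ∀ ⦃a b c : V⦄ (p : Γ.Walk a b) (q : Γ.Walk b c) (r : Γ.Walk a c),
    IsGeodesic Γ p → IsGeodesic Γ q → IsGeodesic Γ r →
    ∀ v ∈ r.support,
      (∃ w ∈ p.support, Γ.dist v w ≤ δ) ∨ (∃ w ∈ q.support, Γ.dist v w ≤ δ)

end GM

namespace GM

variable {G : Type} [Group G] {ι : Type}

/-- The graph `H(m)`: the full subgraph of the Groves–Manning space on the vertices of
depth exactly `m` in the horoball over `t • (P i)` (its edges are the horizontal edges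
at depth `m`). -/
def levelGraph (S : Set G) (P : ι → Subgroup G) (i : ι) (t : G) (m : ℕ) :
    SimpleGraph (GMVert G ι) where
  Adj v w := (GMGraph S P).Adj v w ∧ v ∈ horoball P i t ∧ w ∈ horoball P i t ∧
    depth v = m ∧ depth w = m
  symm := by constructor; rintro v w ⟨h1, h2, h3, h4, h5⟩; exact ⟨h1.symm, h3, h2, h5, h4⟩
  loopless := ⟨fun v h => (GMGraph S P).irrefl h.1⟩

/-- `d^m(z,·)`-ball: `B̂_n(z)` is the set of vertices `v` of `H(m)` with `d^m(v,z) ≤ n`,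
where `d^m` is the edge-path distance in the graph `H(m)`. -/
def hatB (S : Set G) (P : ι → Subgroup G) (i : ι) (t : G) (m : ℕ)
    (z : GMVert G ι) (n : ℕ) : Set (GMVert G ι) :=
  {v | v ∈ horoSphere P i t m ∧ (levelGraph S P i t m).Reachable z v ∧
    (levelGraph S P i t m).dist z v ≤ n}

end GM

namespace GM

variable {G : Type} [Group G] {ι : Type}

/-- The list of "dropped" vertices of a walk `ψ`: its starting vertex, followed by the
vertical drops to depth `k` (in the horoballs of `P i`) of the terminal vertices of the
horizontal darts of `ψ`, in order. -/
def dropList (i : ι) (k : ℕ) {S : Set G} {P : ι → Subgroup G} {x y : GMVert G ι}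
    (ψ : (GMGraph S P).Walk x y) : List (GMVert G ι) :=
  x :: ((ψ.darts.filter (fun d => depth d.toProd.1 == depth d.toProd.2)).map
    (fun d => atLevel i (baseElt d.toProd.2) k))

/-- `ChainWalk Γ l w` says that the walk `w` is a concatenation of geodesic
(shortest) walks in `Γ` joining the consecutive vertices of the list `l`. -/
inductive ChainWalk {V : Type} (Γ : SimpleGraph V) : List V → ∀ {a b : V}, Γ.Walk a b → Prop
  | single {a : V} : ChainWalk Γ [a] (SimpleGraph.Walk.nil : Γ.Walk a a)
  | step {a b c : V} (σ : Γ.Walk a b) {rest : Γ.Walk b c} (l : List V)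
      (hσ : σ.length = Γ.dist a b) (h : ChainWalk Γ (b :: l) rest) :
      ChainWalk Γ (a :: b :: l) (σ.append rest)

/-- `γ` is a projection of `ψ` into `H(k)`: it is obtained by dropping each vertex of
each horizontal segment of `ψ` vertically down to `H(k)` and joining the consecutive
resulting vertices by shortest edge paths in the graph `H(k)`. -/
def IsProjection (S : Set G) (P : ι → Subgroup G) (i : ι) (t : G) (k : ℕ)
    {x y x' y' : GMVert G ι} (ψ : (GMGraph S P).Walk x y)
    (γ : (levelGraph S P i t k).Walk x' y') : Prop :=
  ChainWalk (levelGraph S P i t k) (dropList i k ψ) γ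

end GM

/-! A horizontal edge `τ` of `ψ` at depth `l ≥ k` joins two vertices whose bases are at
distance at most `2 ^ l` in the coset graph. Since a horizontal edge at depth `k` covers
coset distance `2 ^ k`, the projection of `τ` to `H(k)` is a geodesic of length at most
`2 ^ (l - k)`, and every vertex on it has base within coset distance `2 ^ (l - k) * 2 ^ k
= 2 ^ l` of the base of the initial vertex of `τ`: its vertical line meets depth `l` at,
or next to, that vertex. Vertical edges do not change the base, so consecutive dropped
vertices are exactly the drops of the endpoints of a horizontal edge of `ψ`, and `γ` is
covered by the projections of the horizontal edges. -/

namespace GM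

theorem ChainWalk.forall_mem_support {V : Type} {Γ : SimpleGraph V} {Q : V → Prop}
    {R : V → V → Prop}
    (hR : ∀ ⦃u v⦄, R u v → ∀ σ : Γ.Walk u v, σ.length = Γ.dist u v → ∀ p ∈ σ.support, Q p)
    {l : List V} {a b : V} {w : Γ.Walk a b} (hw : ChainWalk Γ l w) (hl : l.IsChain R)
    (hQ : ∀ u ∈ l, Q u) : ∀ p ∈ w.support, Q p := by
  induction hw with
  | @single a =>
    simpa using hQ a (List.mem_singleton_self a)
  | @step a b c σ rest l hσ h ih =>
    intro p hp
    rw [Walk.support_append, List.mem_append] at hp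
    obtain ⟨hab, hl⟩ := List.isChain_cons_cons.mp hl
    rcases hp with hp | hp
    · exact hR hab σ hσ p hp
    · exact ih hl (fun u hu => hQ u (List.mem_cons_of_mem _ hu)) p (List.mem_of_mem_tail hp)

variable {G ι : Type}

@[simp]
lemma baseElt_atLevel (i : ι) (c : G) (k : ℕ) : baseElt (atLevel i c k : GMVert G ι) = c := by
  cases k <;> rfl

variable [Group G] {S : Set G} {P : ι → Subgroup G} {i : ι} {g : G}

/-- The vertical line over `p` passes within one horizontal unit of `v`. -/
def NearVertical (S : Set G) (P : ι → Subgroup G) (i : ι) (p v : GMVert G ι) : Prop :=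
  atLevel i (baseElt p) (depth v) = v ∨ (GMGraph S P).Adj (atLevel i (baseElt p) (depth v)) v

lemma atLevel_baseElt_depth {v : GMVert G ι} (hv : v ∈ horoball P i g) :
    atLevel i (baseElt v) (depth v) = v := by
  rcases v with a | ⟨j, a, ⟨_ | m, hm⟩⟩
  · rfl
  · exact absurd hm (lt_irrefl 0)
  · obtain ⟨rfl, -⟩ := hv
    rfl

lemma inv_mul_baseElt_mem {v : GMVert G ι} (hv : v ∈ horoball P i g) :
    g⁻¹ * baseElt v ∈ P i := by
  rcases v with a | ⟨j, a, m⟩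
  · exact hv
  · exact hv.2

lemma inv_mul_mem_of_cosetGraph_walk {a b : G} (w : (cosetGraph S P i).Walk a b) :
    a⁻¹ * b ∈ P i := by
  induction w with
  | nil => simp
  | @cons a b c h w ih => simpa [mul_assoc] using mul_mem h.2 ih

lemma baseElt_eq_of_adj_of_depth_ne {v w : GMVert G ι} (h : (GMGraph S P).Adj v w)
    (hd : depth v ≠ depth w) : baseElt v = baseElt w := by
  rcases v with a | ⟨j, a, m⟩ <;> rcases w with b | ⟨j', b, m'⟩
  · exact absurd rfl hd
  · exact h.1
  · exact h.1
  · rcases h with ⟨rfl, ⟨rfl, -⟩ | ⟨hk, -⟩⟩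
    · rfl
    · exact absurd hk hd

lemma exists_cosetGraph_walk_of_adj {v w : GMVert G ι} (h : (GMGraph S P).Adj v w)
    (hv : v ∈ horoball P i g) (hw : w ∈ horoball P i g) (hd : depth v = depth w) :
    ∃ u : (cosetGraph S P i).Walk (baseElt v) (baseElt w), u.length ≤ 2 ^ depth v := by
  rcases v with a | ⟨j, a, m⟩ <;> rcases w with b | ⟨j', b, m'⟩
  · have hab : a⁻¹ * b ∈ P i := by
      simpa [mul_assoc] using mul_mem ((P i).inv_mem hv) hw
    exact ⟨Walk.cons (show (cosetGraph S P i).Adj a b from ⟨h, hab⟩) .nil,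
      Nat.one_le_two_pow⟩
  · exact absurd hd (ne_of_lt m'.pos)
  · exact absurd hd (ne_of_gt m.pos)
  · obtain ⟨rfl, -⟩ := hv
    obtain ⟨rfl, -⟩ := hw
    rcases h with ⟨-, ⟨rfl, hvert⟩ | ⟨-, -, -, hreach, hdist⟩⟩
    · have : (m : ℕ) = m' := hd
      omega
    · obtain ⟨u, hu⟩ := hreach.exists_walk_length_eq_dist
      exact ⟨u, hu ▸ hdist⟩

lemma exists_cosetGraph_walk_of_levelGraph_walk {k : ℕ} {v w : GMVert G ι}
    (W : (levelGraph S P i g k).Walk v w) :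
    ∃ u : (cosetGraph S P i).Walk (baseElt v) (baseElt w), u.length ≤ W.length * 2 ^ k := by
  induction W with
  | nil => exact ⟨.nil, by simp⟩
  | @cons a b c h W ih =>
    rw [Walk.length_cons, add_mul, one_mul]
    obtain ⟨hadj, ha, hb, hda, hdb⟩ := h
    obtain ⟨u₁, hu₁⟩ := exists_cosetGraph_walk_of_adj hadj ha hb (hda.trans hdb.symm)
    obtain ⟨u₂, hu₂⟩ := ih
    rw [hda] at hu₁
    exact ⟨u₁.append u₂, by rw [Walk.length_append]; omega⟩

lemma levelGraph_adj_atLevel {k : ℕ} {c c' : G} (u : (cosetGraph S P i).Walk c c')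
    (hu : u.length ≤ 2 ^ k) (hc : g⁻¹ * c ∈ P i) (hne : c ≠ c') :
    (levelGraph S P i g k).Adj (atLevel i c k) (atLevel i c' k) := by
  have hcc' : c⁻¹ * c' ∈ P i := inv_mul_mem_of_cosetGraph_walk u
  have hc' : g⁻¹ * c' ∈ P i := by simpa [mul_assoc] using mul_mem hc hcc'
  cases k with
  | zero =>
    cases u with
    | nil => exact absurd rfl hne
    | cons h u =>
      obtain rfl := Walk.eq_of_length_eq_zero (by simpa using hu)
      exact ⟨h.1, hc, hc', rfl, rfl⟩
  | succ s =>
    exact ⟨⟨rfl, .inr ⟨rfl, hne, hcc', ⟨u⟩, (dist_le u).trans hu⟩⟩, ⟨rfl, hc⟩, ⟨rfl, hc'⟩,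
      rfl, rfl⟩

lemma exists_levelGraph_walk_of_cosetGraph_walk (k m : ℕ) {c c' : G}
    (u : (cosetGraph S P i).Walk c c') (hu : u.length ≤ m * 2 ^ k) (hc : g⁻¹ * c ∈ P i) :
    ∃ W : (levelGraph S P i g k).Walk (atLevel i c k) (atLevel i c' k), W.length ≤ m := by
  induction m generalizing c with
  | zero =>
    obtain rfl := Walk.eq_of_length_eq_zero (Nat.eq_zero_of_le_zero (by simpa using hu))
    exact ⟨.nil, le_rfl⟩
  | succ m ih =>
    set e := u.getVert (2 ^ k)
    have hstep : ∃ W : (levelGraph S P i g k).Walk (atLevel i c k) (atLevel i e k),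
        W.length ≤ 1 := by
      by_cases hce : c = e
      · exact ⟨(Walk.nil).copy rfl (by rw [hce]), by simp⟩
      · exact ⟨.cons (levelGraph_adj_atLevel (u.take (2 ^ k))
          (by simp [Walk.take_length]) hc hce) .nil, le_rfl⟩
    obtain ⟨W₁, hW₁⟩ := hstep
    have he : g⁻¹ * e ∈ P i := by
      simpa [mul_assoc] using mul_mem hc (inv_mul_mem_of_cosetGraph_walk (u.take (2 ^ k)))
    obtain ⟨W₂, hW₂⟩ := ih (u.drop (2 ^ k))
      (by rw [Walk.drop_length]; rw [add_mul, one_mul] at hu; omega) he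
    exact ⟨W₁.append W₂, by rw [Walk.length_append]; omega⟩

lemma nearVertical_of_baseElt_eq {p e : GMVert G ι} (he : e ∈ horoball P i g)
    (hpe : baseElt p = baseElt e) : NearVertical S P i p e :=
  .inl (by rw [hpe, atLevel_baseElt_depth he])

lemma nearVertical_of_cosetGraph_walk {p e : GMVert G ι} (he : e ∈ horoball P i g)
    (u : (cosetGraph S P i).Walk (baseElt p) (baseElt e)) (hu : u.length ≤ 2 ^ depth e) :
    NearVertical S P i p e := by
  by_cases hpe : baseElt p = baseElt e
  · exact nearVertical_of_baseElt_eq he hpe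
  · right
    have hp : g⁻¹ * baseElt p ∈ P i := by
      simpa [mul_assoc] using
        mul_mem (inv_mul_baseElt_mem he) ((P i).inv_mem (inv_mul_mem_of_cosetGraph_walk u))
    have h := (levelGraph_adj_atLevel u hu hp hpe).1
    rwa [atLevel_baseElt_depth he] at h

theorem nearVertical_of_mem_support_of_length_eq_dist {k : ℕ} {v w : GMVert G ι}
    (hvw : (GMGraph S P).Adj v w) (hv : v ∈ horoDeep P i g k) (hw : w ∈ horoDeep P i g k)
    (hd : depth v = depth w)
    (σ : (levelGraph S P i g k).Walk (atLevel i (baseElt v) k) (atLevel i (baseElt w) k))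
    (hσ : σ.length = (levelGraph S P i g k).dist (atLevel i (baseElt v) k)
      (atLevel i (baseElt w) k))
    {p : GMVert G ι} (hp : p ∈ σ.support) : NearVertical S P i p v := by
  classical
  obtain ⟨hv, hkv⟩ := hv
  have hpow : 2 ^ (depth v - k) * 2 ^ k = 2 ^ depth v := by
    rw [← pow_add, Nat.sub_add_cancel hkv]
  obtain ⟨u, hu⟩ := exists_cosetGraph_walk_of_adj hvw hv hw.1 hd
  obtain ⟨W, hW⟩ := exists_levelGraph_walk_of_cosetGraph_walk k (2 ^ (depth v - k)) u
    (hpow ▸ hu) (inv_mul_baseElt_mem hv)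
  have hσ_le : σ.length ≤ 2 ^ (depth v - k) := hσ ▸ (dist_le W).trans hW
  obtain ⟨u₁, hu₁⟩ := exists_cosetGraph_walk_of_levelGraph_walk (σ.takeUntil p hp)
  refine nearVertical_of_cosetGraph_walk hv (u₁.copy (baseElt_atLevel _ _ _) rfl).reverse ?_
  calc (u₁.copy _ rfl).reverse.length = u₁.length := by simp
    _ ≤ σ.length * 2 ^ k :=
        hu₁.trans (Nat.mul_le_mul_right _ (σ.length_takeUntil_le_length hp))
    _ ≤ 2 ^ depth v := hpow ▸ Nat.mul_le_mul_right _ hσ_le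

lemma isChain_baseElt_horizontal_darts {x y : GMVert G ι} (ψ : (GMGraph S P).Walk x y) :
    (baseElt x :: (ψ.darts.filter (fun d => depth d.toProd.1 == depth d.toProd.2)).map
        (fun d => baseElt d.toProd.2)).IsChain
      (fun a b => ∃ d ∈ ψ.darts, depth d.toProd.1 = depth d.toProd.2 ∧
        baseElt d.toProd.1 = a ∧ baseElt d.toProd.2 = b) := by
  induction ψ with
  | nil => exact List.isChain_singleton _
  | @cons x z y h ψ ih =>
    rw [Walk.darts_cons, List.filter_cons]
    have ih' := ih.imp (S := fun a b => ∃ d ∈ Dart.mk (x, z) h :: ψ.darts,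
        depth d.toProd.1 = depth d.toProd.2 ∧ baseElt d.toProd.1 = a ∧ baseElt d.toProd.2 = b)
      fun _ _ ⟨d, hd, hdd⟩ => ⟨d, List.mem_cons_of_mem _ hd, hdd⟩
    by_cases hxz : depth x = depth z
    · rw [if_pos (by simpa using hxz), List.map_cons]
      exact List.isChain_cons_cons.mpr ⟨⟨⟨(x, z), h⟩, List.mem_cons_self, hxz, rfl, rfl⟩, ih'⟩
    · rw [if_neg (by simpa using hxz), baseElt_eq_of_adj_of_depth_ne h hxz]
      exact ih'

lemma exists_horizontal_dart_baseElt_fst_eq {x y : GMVert G ι} (ψ : (GMGraph S P).Walk x y)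
    (hhoriz : ∃ d ∈ ψ.darts, depth d.toProd.1 = depth d.toProd.2) :
    ∃ d ∈ ψ.darts, depth d.toProd.1 = depth d.toProd.2 ∧ baseElt d.toProd.1 = baseElt x := by
  obtain ⟨d₀, hd₀, hdd₀⟩ := hhoriz
  have hne : (ψ.darts.filter fun d => depth d.toProd.1 == depth d.toProd.2) ≠ [] :=
    List.ne_nil_of_mem (List.mem_filter.mpr ⟨hd₀, by simpa using hdd₀⟩)
  obtain ⟨d₁, l, hl⟩ := List.exists_cons_of_ne_nil hne
  have hchain := isChain_baseElt_horizontal_darts ψ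
  rw [hl, List.map_cons] at hchain
  obtain ⟨d, hd, hdd, hxd, -⟩ := (List.isChain_cons_cons.mp hchain).1
  exact ⟨d, hd, hdd, hxd⟩

section dropList

variable {k : ℕ} {x y : GMVert G ι} (ψ : (GMGraph S P).Walk x y)

lemma dropList_eq_map (hx : atLevel i (baseElt x) k = x) :
    dropList i k ψ = (baseElt x :: (ψ.darts.filter
      (fun d => depth d.toProd.1 == depth d.toProd.2)).map (fun d => baseElt d.toProd.2)).map
        (fun c => atLevel i c k) := by
  simp only [dropList, List.map_cons, hx, List.map_map, Function.comp_def]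

lemma isChain_dropList (hx : atLevel i (baseElt x) k = x) :
    (dropList i k ψ).IsChain fun u v => ∃ d ∈ ψ.darts, depth d.toProd.1 = depth d.toProd.2 ∧
      u = atLevel i (baseElt d.toProd.1) k ∧ v = atLevel i (baseElt d.toProd.2) k := by
  rw [dropList_eq_map ψ hx, List.isChain_map]
  exact (isChain_baseElt_horizontal_darts ψ).imp
    fun a b ⟨d, hd, hdd, ha, hb⟩ => ⟨d, hd, hdd, by rw [ha], by rw [hb]⟩

lemma exists_nearVertical_of_mem_dropList (hψ : ∀ v ∈ ψ.support, v ∈ horoball P i g)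
    (hhoriz : ∃ d ∈ ψ.darts, depth d.toProd.1 = depth d.toProd.2)
    (hx : atLevel i (baseElt x) k = x) {u : GMVert G ι} (hu : u ∈ dropList i k ψ) :
    ∃ d ∈ ψ.darts, depth d.toProd.1 = depth d.toProd.2 ∧
      ∃ v ∈ [d.toProd.1, d.toProd.2], NearVertical S P i u v := by
  rw [dropList_eq_map ψ hx] at hu
  obtain ⟨c, hc, rfl⟩ := List.mem_map.mp hu
  rcases List.mem_cons.mp hc with rfl | hc
  · obtain ⟨d, hd, hdd, hxd⟩ := exists_horizontal_dart_baseElt_fst_eq ψ hhoriz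
    exact ⟨d, hd, hdd, d.toProd.1, by simp, nearVertical_of_baseElt_eq
      (hψ _ (ψ.dart_fst_mem_support_of_mem_darts hd)) (by simp [hxd])⟩
  · obtain ⟨d, hd, rfl⟩ := List.mem_map.mp hc
    obtain ⟨hd, hdd⟩ := List.mem_filter.mp hd
    exact ⟨d, hd, by simpa using hdd, d.toProd.2, by simp, nearVertical_of_baseElt_eq
      (hψ _ (ψ.dart_snd_mem_support_of_mem_darts hd)) (baseElt_atLevel _ _ _)⟩

end dropList

end GM

open GM in
theorem statement_6_general {G : Type} [Group G] {ι : Type}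
    (S : Finset G) (P : ι → Subgroup G)
    (i : ι) (g : G) (k : ℕ)
    (x y : GMVert G ι) (hx : x ∈ horoSphere P i g k)
    (ψ : (GMGraph (S : Set G) P).Walk x y)
    -- `ψ` lies in `H^k`:
    (hdeep : ∀ v ∈ ψ.support, v ∈ horoDeep P i g k)
    -- `ψ` begins and ends with (nontrivial) vertical segments and has at least one
    -- (nontrivial) horizontal segment:
    (hhoriz : ∃ d ∈ ψ.darts, depth d.toProd.1 = depth d.toProd.2)
    -- `γ` is a projection of `ψ` into `H(k)`:
    {x' y' : GMVert G ι} (γ : (levelGraph (S : Set G) P i g k).Walk x' y')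
    (hproj : IsProjection (S : Set G) P i g k ψ γ) :
    ∀ p ∈ γ.support, ∃ d ∈ ψ.darts, depth d.toProd.1 = depth d.toProd.2 ∧
      ∃ v ∈ [d.toProd.1, d.toProd.2],
        (atLevel i (baseElt p) (depth v) = v ∨
          (GMGraph (S : Set G) P).Adj (atLevel i (baseElt p) (depth v)) v) := by
  have hx' : atLevel i (baseElt x) k = x := hx.2 ▸ atLevel_baseElt_depth hx.1
  refine ChainWalk.forall_mem_support ?_ hproj (isChain_dropList ψ hx')
    fun u hu => exists_nearVertical_of_mem_dropList ψ (fun v hv => (hdeep v hv).1) hhoriz hx' hu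
  rintro _ _ ⟨d, hd, hdd, rfl, rfl⟩ σ hσ p hp
  exact ⟨d, hd, hdd, d.toProd.1, by simp, nearVertical_of_mem_support_of_length_eq_dist d.adj
    (hdeep _ (ψ.dart_fst_mem_support_of_mem_darts hd))
    (hdeep _ (ψ.dart_snd_mem_support_of_mem_darts hd)) hdd σ hσ hp⟩

open GM in
/-- Lemma "Proj".  Suppose `H` is a horoball of the Groves–Manning
space `X`, `x, y ∈ H(k)`, and `ψ = (α₁, τ₁, α₂, τ₂, …, αₙ, τₙ, α_{n+1})` is a path in
`H^k` between `x` and `y`, where each `αᵢ` is a nontrivial vertical segment and each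
`τᵢ` is a nontrivial horizontal segment (equivalently: `ψ` is nonempty, begins and ends
with a vertical edge, and contains a horizontal edge).  If `γ` is a projection of `ψ`
into `H(k)`, then for every vertex of `γ`, the vertical line at that vertex passes within
1 horizontal unit of a vertex of one of the `τᵢ` (a vertex of a horizontal edge of `ψ`). -/
theorem statement_6 {G : Type} [Group G] {ι : Type} [Fintype ι]
    (S : Finset G) (P : ι → Subgroup G)
    (hSgen : Subgroup.closure (S : Set G) = ⊤)
    (hPgen : ∀ i, Subgroup.closure ((S : Set G) ∩ (P i : Set G)) = P i)
    (hProper : ∀ i, P i ≠ ⊤)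
    (δ : ℕ) (hδ : 1 ≤ δ) (hhyp : SlimTriangles (GMGraph (S : Set G) P) δ)
    (i : ι) (g : G) (k : ℕ)
    (x y : GMVert G ι) (hx : x ∈ horoSphere P i g k) (hy : y ∈ horoSphere P i g k)
    (ψ : (GMGraph (S : Set G) P).Walk x y)
    -- `ψ` lies in `H^k`:
    (hdeep : ∀ v ∈ ψ.support, v ∈ horoDeep P i g k)
    -- `ψ` begins and ends with (nontrivial) vertical segments and has at least one
    -- (nontrivial) horizontal segment:
    (hne : ψ.darts ≠ [])
    (hfirst : ∀ d, ψ.darts.head? = some d → depth d.toProd.1 ≠ depth d.toProd.2)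
    (hlast : ∀ d, ψ.darts.getLast? = some d → depth d.toProd.1 ≠ depth d.toProd.2)
    (hhoriz : ∃ d ∈ ψ.darts, depth d.toProd.1 = depth d.toProd.2)
    -- `γ` is a projection of `ψ` into `H(k)`:
    {x' y' : GMVert G ι} (γ : (levelGraph (S : Set G) P i g k).Walk x' y')
    (hproj : IsProjection (S : Set G) P i g k ψ γ) :
    ∀ p ∈ γ.support, ∃ d ∈ ψ.darts, depth d.toProd.1 = depth d.toProd.2 ∧
      ∃ v ∈ [d.toProd.1, d.toProd.2],
        (atLevel i (baseElt p) (depth v) = v ∨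
          (GMGraph (S : Set G) P).Adj (atLevel i (baseElt p) (depth v)) v) :=
  statement_6_general S P i g k x y hx ψ hdeep hhoriz γ hproj
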